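/- Let S and S' be filtered λ-ring structures on ℤ[x]/(x⁴) of the following form: S has parameters k ∈ {1, 5} and an even integer d₂, with ψ_2^S(x) = 4x + kx² + d₂x³ and ψ_p^S(x) = p²x + (k·p²(p² − 1)/12)·x² + d_p·x³ for odd primes p, where d_p = p²(p⁴ − 1)·d₂/60 + k²·p²(p² − 1)(p² − 4)/360; and S' is defined likewise with parameters k' ∈ {1, 5} and an even integer d₂'. Then S and S' are isomorphic if and only if k = k' and d₂ ≡ d₂' (mod 60). -/

import Mathlib

open Polynomial

noncomputable section

/-- The truncated polynomial ring `ℤ[x]/(xⁿ)`. -/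
abbrev TP (n : ℕ) : Type := Polynomial ℤ ⧸ Ideal.span {(X : Polynomial ℤ) ^ n}

/-- The class of `x` in `ℤ[x]/(xⁿ)`. -/
def xx (n : ℕ) : TP n := Ideal.Quotient.mk _ (X : Polynomial ℤ)

/-- A filtered λ-ring structure on `ℤ[x]/(xⁿ)`, presented (via Wilkerson's theorem) as a
family of Adams operations `ψ p`, indexed by the primes `p`: each `ψ p` is a ring
endomorphism preserving the filtration ideal `(x)`, they pairwise commute, and
`ψ p r ≡ r ^ p (mod p)`. -/
structure AdamsFamily (n : ℕ) : Type where
  ψ : Nat.Primes → (TP n →+* TP n)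
  maps_ideal : ∀ (p : Nat.Primes), ∀ a ∈ Ideal.span {xx n}, ψ p a ∈ Ideal.span {xx n}
  comm : ∀ p q : Nat.Primes, (ψ p).comp (ψ q) = (ψ q).comp (ψ p)
  frob : ∀ (p : Nat.Primes) (a : TP n),
    ψ p a - a ^ (p : ℕ) ∈ Ideal.span {((p : ℕ) : TP n)}

/-- Isomorphism of filtered λ-ring structures on `ℤ[x]/(xⁿ)`: a filtration-preserving ring
automorphism intertwining the Adams operations. -/
def AdamsIso {n : ℕ} (R S : AdamsFamily n) : Prop :=
  ∃ σ : TP n ≃+* TP n,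
    (Ideal.span {xx n}).map σ.toRingHom = Ideal.span {xx n} ∧
    ∀ p : Nat.Primes, σ.toRingHom.comp (R.ψ p) = (S.ψ p).comp σ.toRingHom

/-- The prime 2 as an element of `Nat.Primes`. -/
def P2 : Nat.Primes := ⟨2, Nat.prime_two⟩

/-- The prime 3 as an element of `Nat.Primes`. -/
def P3 : Nat.Primes := ⟨3, Nat.prime_three⟩

/-- The coefficient `d_p = p²(p⁴ − 1)d₂/60 + k²p²(p² − 1)(p² − 4)/360`. -/
def dcoef (k d2 : ℤ) (p : ℕ) : ℤ :=
  (p : ℤ) ^ 2 * ((p : ℤ) ^ 4 - 1) * d2 / 60 +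
    k ^ 2 * (p : ℤ) ^ 2 * ((p : ℤ) ^ 2 - 1) * ((p : ℤ) ^ 2 - 4) / 360

/-- The coefficient `c_p = k·p²(p² − 1)/12`. -/
def ccoef (k : ℤ) (p : ℕ) : ℤ := k * ((p : ℤ) ^ 2 * ((p : ℤ) ^ 2 - 1)) / 12

/-- The family `S(k, d₂)`: `ψ_2(x) = 4x + kx² + d₂x³` and
`ψ_p(x) = p²x + (k·p²(p² − 1)/12)x² + d_p x³` for odd primes `p`. -/
def SpecKD (k d2 : ℤ) (S : AdamsFamily 4) : Prop :=
  S.ψ P2 (xx 4) = (4 : TP 4) * xx 4 + (k : TP 4) * xx 4 ^ 2 + (d2 : TP 4) * xx 4 ^ 3 ∧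
  ∀ p : Nat.Primes, 2 < (p : ℕ) →
    S.ψ p (xx 4) = ((p : ℕ) : TP 4) ^ 2 * xx 4 + (ccoef k (p : ℕ) : TP 4) * xx 4 ^ 2 +
      (dcoef k d2 (p : ℕ) : TP 4) * xx 4 ^ 3

/-!
An isomorphism `σ` must send `x` to `a x + b x² + c x³` with `a = ±1`, since `σ⁻¹` has the same
shape and the linear coefficients multiply to `1`. Comparing `σ ψ₂ = ψ₂' σ` in degree 2 gives
`12 b = k a² - k' a`, which for `k, k' ∈ {1, 5}` forces `a = 1`, `b = 0`, `k = k'`; degree 3 then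
gives `d₂ - d₂' = 60 c`. Conversely the shear `x ↦ x + c x³` conjugates `ψ_p(x) = p² x + ⋯ + d x³`
to the operation with `d` replaced by `d - (p⁶ - p²) c`, and `d_p` depends on `d₂` exactly through
`p²(p⁴ - 1) d₂ / 60`, which shifts by `(p⁶ - p²) c` when `d₂` shifts by `60 c`.
-/

namespace TP

variable {n : ℕ}

theorem xx_pow_eq_zero (n : ℕ) : xx n ^ n = 0 := by
  rw [xx, ← map_pow, Ideal.Quotient.eq_zero_iff_mem]
  exact Ideal.mem_span_singleton_self _

theorem mk_eq_zero_iff (P : ℤ[X]) :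
    Ideal.Quotient.mk (Ideal.span {(X : ℤ[X]) ^ n}) P = 0 ↔ ∀ i < n, P.coeff i = 0 := by
  rw [Ideal.Quotient.eq_zero_iff_mem, Ideal.mem_span_singleton, X_pow_dvd_iff]

theorem ringHom_ext {R : Type*} [Semiring R] {f g : TP n →+* R} (h : f (xx n) = g (xx n)) :
    f = g :=
  Ideal.Quotient.ringHom_ext (Polynomial.ringHom_ext' (RingHom.ext_int _ _) h)

def lift {R : Type*} [CommRing R] (a : R) (ha : a ^ n = 0) : TP n →+* R :=
  Ideal.Quotient.lift _ (eval₂RingHom (Int.castRingHom R) a) fun P hP => by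
    obtain ⟨Q, rfl⟩ := Ideal.mem_span_singleton'.mp hP
    simp [ha]

theorem lift_xx {R : Type*} [CommRing R] (a : R) (ha : a ^ n = 0) : lift a ha (xx n) = a := by
  simp [lift, xx]

def jet (a b c : ℤ) : TP 4 := (a : TP 4) * xx 4 + (b : TP 4) * xx 4 ^ 2 + (c : TP 4) * xx 4 ^ 3

theorem jet_eq_mk (a b c : ℤ) :
    jet a b c = Ideal.Quotient.mk _ (C a * X + C b * X ^ 2 + C c * X ^ 3) := by
  simp [jet, xx]

theorem coeffs_eq_of_jet_eq {a b c a' b' c' : ℤ} (h : jet a b c = jet a' b' c') :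
    a = a' ∧ b = b' ∧ c = c' := by
  rw [jet_eq_mk, jet_eq_mk, ← sub_eq_zero, ← map_sub, mk_eq_zero_iff] at h
  have h1 := h 1 (by norm_num)
  have h2 := h 2 (by norm_num)
  have h3 := h 3 (by norm_num)
  simp only [coeff_sub, coeff_add, coeff_C_mul, coeff_X_pow, coeff_X] at h1 h2 h3
  norm_num at h1 h2 h3
  omega

theorem exists_jet_of_mem_span {t : TP 4} (ht : t ∈ Ideal.span {xx 4}) :
    ∃ a b c : ℤ, t = jet a b c := by
  obtain ⟨s, rfl⟩ := Ideal.mem_span_singleton'.mp ht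
  obtain ⟨P, rfl⟩ := Ideal.Quotient.mk_surjective s
  refine ⟨P.coeff 0, P.coeff 1, P.coeff 2, ?_⟩
  rw [jet_eq_mk, xx, ← map_mul, ← sub_eq_zero, ← map_sub, mk_eq_zero_iff]
  intro i hi
  interval_cases i <;>
    simp only [coeff_sub, coeff_add, coeff_C_mul, coeff_X_pow, coeff_mul_X, coeff_mul_X_zero,
      coeff_C] <;>
    norm_num

theorem jet_pow_four (a b c : ℤ) : jet a b c ^ 4 = 0 := by
  rw [show jet a b c = xx 4 * (a + b * xx 4 + c * xx 4 ^ 2) by unfold jet; ring, mul_pow,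
    xx_pow_eq_zero, zero_mul]

-- Composition of power series without constant term, truncated modulo `x⁴`.
theorem map_jet {F : Type*} [FunLike F (TP 4) (TP 4)] [RingHomClass F (TP 4) (TP 4)] (f : F)
    {a b c : ℤ} (hf : f (xx 4) = jet a b c) (a' b' c' : ℤ) :
    f (jet a' b' c') =
      jet (a' * a) (a' * b + b' * a ^ 2) (a' * c + 2 * b' * a * b + c' * a ^ 3) := by
  simp only [jet, map_add, map_mul, map_pow, map_intCast] at hf ⊢
  rw [hf]
  push_cast
  set x := xx 4
  linear_combination ((b' : TP 4) * (2 * a * c + (b + c * x) ^ 2) +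
    (c' : TP 4) * (b + c * x) * (3 * a ^ 2 + 3 * a * x * (b + c * x) + x ^ 2 * (b + c * x) ^ 2)) *
    xx_pow_eq_zero 4

def jetHom (a b c : ℤ) : TP 4 →+* TP 4 := lift (jet a b c) (jet_pow_four a b c)

theorem jetHom_xx (a b c : ℤ) : jetHom a b c (xx 4) = jet a b c := lift_xx _ _

theorem xx_eq_jet : xx 4 = jet 1 0 0 := by simp [jet]

def shear (c : ℤ) : TP 4 ≃+* TP 4 :=
  RingEquiv.ofRingHom (jetHom 1 0 c) (jetHom 1 0 (-c))
    (ringHom_ext <| by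
      rw [RingHom.comp_apply, jetHom_xx, map_jet _ (jetHom_xx 1 0 c), RingHom.id_apply, xx_eq_jet]
      norm_num)
    (ringHom_ext <| by
      rw [RingHom.comp_apply, jetHom_xx, map_jet _ (jetHom_xx 1 0 (-c)), RingHom.id_apply,
        xx_eq_jet]
      norm_num)

theorem shear_xx (c : ℤ) : shear c (xx 4) = jet 1 0 c := jetHom_xx 1 0 c

theorem map_shear_span_xx (c : ℤ) :
    (Ideal.span {xx 4}).map (shear c).toRingHom = Ideal.span {xx 4} := by
  have hunit : IsUnit (1 + (c : TP 4) * xx 4 ^ 2) :=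
    IsNilpotent.isUnit_one_add ⟨2, by rw [mul_pow, ← pow_mul, xx_pow_eq_zero, mul_zero]⟩
  rw [Ideal.map_span, Set.image_singleton, RingEquiv.toRingHom_eq_coe, RingEquiv.coe_toRingHom,
    shear_xx, ← Ideal.span_singleton_mul_right_unit hunit (xx 4)]
  congr 2
  simp [jet]
  ring

end TP

open TP

theorem exists_jet_of_map_span_xx (σ : TP 4 ≃+* TP 4)
    (hσ : (Ideal.span {xx 4}).map σ.toRingHom = Ideal.span {xx 4}) :
    ∃ a b c : ℤ, σ (xx 4) = jet a b c ∧ (a = 1 ∨ a = -1) := by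
  have hx : xx 4 ∈ Ideal.span {xx 4} := Ideal.mem_span_singleton_self _
  obtain ⟨a, b, c, hσx⟩ : ∃ a b c : ℤ, σ (xx 4) = jet a b c :=
    exists_jet_of_mem_span (hσ ▸ Ideal.mem_map_of_mem σ.toRingHom hx)
  have hσsymm : σ.symm (xx 4) ∈ Ideal.span {xx 4} := by
    rw [← Ideal.mem_comap, Ideal.comap_symm]
    exact (congrArg (xx 4 ∈ ·) hσ).mpr hx
  obtain ⟨a', b', c', hσ'x⟩ := exists_jet_of_mem_span hσsymm
  have hinv := σ.apply_symm_apply (xx 4)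
  rw [hσ'x, map_jet _ hσx, xx_eq_jet] at hinv
  obtain ⟨hunit, -, -⟩ := coeffs_eq_of_jet_eq hinv
  refine ⟨a, b, c, hσx, ?_⟩
  rcases Int.eq_one_or_neg_one_of_mul_eq_one' hunit with ⟨-, h⟩ | ⟨-, h⟩ <;> simp [h]

theorem eq_and_modEq_of_jet_conj {k k' d d' a b c : ℤ} (hk : k = 1 ∨ k = 5)
    (hk' : k' = 1 ∨ k' = 5) (ha : a = 1 ∨ a = -1)
    (h : jet (4 * a) (4 * b + k * a ^ 2) (4 * c + 2 * k * a * b + d * a ^ 3) =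
      jet (a * 4) (a * k' + b * 4 ^ 2) (a * d' + 2 * b * 4 * k' + c * 4 ^ 3)) :
    k = k' ∧ d ≡ d' [ZMOD 60] := by
  obtain ⟨-, h2, h3⟩ := coeffs_eq_of_jet_eq h
  unfold Int.ModEq
  rcases ha with rfl | rfl <;> rcases hk with rfl | rfl <;> rcases hk' with rfl | rfl <;>
    norm_num at h2 h3 ⊢ <;> omega

theorem dcoef_add_sixty_mul (k d c : ℤ) (p : ℕ) :
    dcoef k (d + 60 * c) p = dcoef k d p + (((p : ℤ) ^ 2) ^ 3 - (p : ℤ) ^ 2) * c := by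
  unfold dcoef
  rw [show (p : ℤ) ^ 2 * ((p : ℤ) ^ 4 - 1) * (d + 60 * c) =
    (p : ℤ) ^ 2 * ((p : ℤ) ^ 4 - 1) * d + (p : ℤ) ^ 2 * ((p : ℤ) ^ 4 - 1) * c * 60 by ring,
    Int.add_mul_ediv_right _ _ (by norm_num)]
  ring

theorem shear_comp {f g : TP 4 →+* TP 4} {a b c d : ℤ}
    (hf : f (xx 4) = jet a b (d + (a ^ 3 - a) * c)) (hg : g (xx 4) = jet a b d) :
    (shear c).toRingHom.comp f = g.comp (shear c).toRingHom := by
  apply TP.ringHom_ext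
  simp only [RingHom.comp_apply, RingEquiv.toRingHom_eq_coe, RingEquiv.coe_toRingHom]
  rw [hf, shear_xx, map_jet _ (shear_xx c), map_jet g hg]
  congr 1 <;> ring

namespace SpecKD

variable {k d2 : ℤ} {S : AdamsFamily 4}

theorem psi_two_xx (hS : SpecKD k d2 S) : S.ψ P2 (xx 4) = jet 4 k d2 := by
  rw [hS.1, jet]
  norm_num

theorem psi_xx (hS : SpecKD k d2 S) (p : Nat.Primes) :
    S.ψ p (xx 4) = jet ((p : ℤ) ^ 2) (ccoef k p) (dcoef k d2 p) := by
  rcases p.2.eq_two_or_odd with hp | hp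
  · obtain rfl : p = P2 := Subtype.ext hp
    rw [hS.psi_two_xx]
    congr 1 <;> norm_num [P2, ccoef, dcoef]
  · rw [hS.2 p (by have := p.2.two_le; omega), jet]
    push_cast
    rfl

theorem adamsIso_of_modEq {d2' : ℤ} {S' : AdamsFamily 4} (hS : SpecKD k d2 S)
    (hS' : SpecKD k d2' S') (h : d2 ≡ d2' [ZMOD 60]) : AdamsIso S S' := by
  obtain ⟨c, hc⟩ := Int.modEq_iff_dvd.mp h.symm
  refine ⟨shear c, map_shear_span_xx c, fun p => shear_comp ?_ (hS'.psi_xx p)⟩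
  rw [hS.psi_xx, show d2 = d2' + 60 * c by omega, dcoef_add_sixty_mul]

theorem eq_and_modEq_of_adamsIso {k' d2' : ℤ} {S' : AdamsFamily 4} (hS : SpecKD k d2 S)
    (hS' : SpecKD k' d2' S') (hk : k = 1 ∨ k = 5) (hk' : k' = 1 ∨ k' = 5) (h : AdamsIso S S') :
    k = k' ∧ d2 ≡ d2' [ZMOD 60] := by
  obtain ⟨σ, hσI, hσψ⟩ := h
  obtain ⟨a, b, c, hσx, ha⟩ := exists_jet_of_map_span_xx σ hσI
  have h2 := RingHom.congr_fun (hσψ P2) (xx 4)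
  simp only [RingHom.comp_apply, RingEquiv.toRingHom_eq_coe, RingEquiv.coe_toRingHom] at h2
  rw [hS.psi_two_xx, hσx, map_jet σ hσx, map_jet _ hS'.psi_two_xx] at h2
  exact eq_and_modEq_of_jet_conj hk hk' ha h2

end SpecKD

theorem stmt15_general (k k' d2 d2' : ℤ) (hk : k = 1 ∨ k = 5) (hk' : k' = 1 ∨ k' = 5)
    (S S' : AdamsFamily 4) (hS : SpecKD k d2 S) (hS' : SpecKD k' d2' S') :
    AdamsIso S S' ↔ (k = k' ∧ Int.ModEq 60 d2 d2') := by
  refine ⟨hS.eq_and_modEq_of_adamsIso hS' hk hk', ?_⟩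
  rintro ⟨rfl, h⟩
  exact hS.adamsIso_of_modEq hS' h

theorem stmt15 (k k' d2 d2' : ℤ) (hk : k = 1 ∨ k = 5) (hk' : k' = 1 ∨ k' = 5)
    (hd2 : Even d2) (hd2' : Even d2')
    (S S' : AdamsFamily 4) (hS : SpecKD k d2 S) (hS' : SpecKD k' d2' S') :
    AdamsIso S S' ↔ (k = k' ∧ Int.ModEq 60 d2 d2') :=
  stmt15_general k k' d2 d2' hk hk' S S' hS hS'
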